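/- arXiv:2512.17844 — 5 statements merged into one kernel-verified Lean document; each statement's English description precedes it below -/
import Mathlib

section
/- Let e be a hyperedge with endpoints partitioned into sets e∩U, e∩W, and e∩D (decided vertices), with |e∖D| = |e∩U| + |e∩W|. Suppose y_{e,u} = 0 for all u ∈ e∩U, y_{e,w} < 1/f for all w ∈ e∩W, the edge-coverage constraint is tight, i.e., ∑_{v∈e∖D} y_{e,v} = 1 − ∑_{v'∈e∩D} ȳ_{e,v'}, and 1 − ∑_{v'∈e∩D} ȳ_{e,v'} ≥ |e∖D|/f. Then e∩U = ∅. -/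
open Finset

/-- For an edge `e` with undecided endpoints `e∩U` and `e∩W` (disjoint),
if `y` vanishes on `e∩U`, `y < 1/f` on `e∩W`, the coverage constraint is tight
(`∑_{v ∈ e∖D} y v = 1 − ∑_{v'∈e∩D} ȳ_{e,v'} =: 1 − r`) and `1 − r ≥ |e∖D|/f`,
then `e∩U = ∅`. -/
theorem tight_edge_no_large_endpoint {V : Type*} [DecidableEq V]
    (f : ℕ) (hf : 0 < f)
    (eU eW : Finset V) (hdisj : Disjoint eU eW)
    (y : V → ℝ) (r : ℝ)
    (hU : ∀ u ∈ eU, y u = 0)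
    (hW : ∀ v ∈ eW, y v < 1 / (f : ℝ))
    (htight : ∑ v ∈ eU ∪ eW, y v = 1 - r)
    (hlb : ((eU.card + eW.card : ℕ) : ℝ) / (f : ℝ) ≤ 1 - r) :
    eU = ∅ := by
  have hfpos : (0 : ℝ) < (f : ℝ) := by exact_mod_cast hf
  have hsum : ∑ v ∈ eU ∪ eW, y v = ∑ v ∈ eW, y v := by
    rw [Finset.sum_union hdisj, Finset.sum_eq_zero hU, zero_add]
  by_contra h
  rcases eW.eq_empty_or_nonempty with hWe | hWne
  · subst hWe
    have h1 : (1 : ℝ) - r = 0 := by simpa using htight.symm.trans hsum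
    have hcpos : 0 < eU.card := Finset.card_pos.mpr (Finset.nonempty_of_ne_empty h)
    have h2 : (0 : ℝ) < ((eU.card + (∅ : Finset V).card : ℕ) : ℝ) / (f : ℝ) := by
      apply div_pos _ hfpos
      have hc : 0 < eU.card + (∅ : Finset V).card := by simpa using hcpos
      exact_mod_cast hc
    linarith
  · have hlt : ∑ v ∈ eW, y v < ∑ v ∈ eW, (1 / (f : ℝ)) :=
      Finset.sum_lt_sum_of_nonempty hWne hW
    have h2 : ∑ v ∈ eW, (1 / (f : ℝ)) = (eW.card : ℝ) / (f : ℝ) := by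
      rw [Finset.sum_const, nsmul_eq_mul]; ring
    have hcard : (eW.card : ℝ) ≤ ((eU.card + eW.card : ℕ) : ℝ) := by
      have : 0 < eU.card := Finset.card_pos.mpr (Finset.nonempty_of_ne_empty h)
      push_cast; linarith
    have h3 : (eW.card : ℝ) / (f : ℝ) ≤ ((eU.card + eW.card : ℕ) : ℝ) / (f : ℝ) :=
      div_le_div_of_nonneg_right hcard hfpos.le
    linarith [htight.symm.trans hsum]
end

section
/- Let G=(V,E) be a graph with nonnegative edge weights p, vertex groups V_1,…,V_ω partitioning V, and requirements ρ_g ≤ |V_g|. Construct H by adding, for each g, a set V'_g of |V_g|−ρ_g new vertices, each joined to every vertex of V_g by an edge of weight M, and setting the weight of each original edge e to 2M−p_e, where M > ∑_e p_e. If M* is a matching in G that matches at least ρ_g vertices in each V_g, then M* extends to a matching M*_H in H that matches every vertex of V, with total H-weight equal to nM − ∑_{e∈M*} p_e, where n = |V|. -/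
/-! Each vertex of `V_g` left unmatched by `M*` gets its own auxiliary partner in `V'_g`,
which is possible group by group because `M*` leaves at most `|V_g| - ρ_g = |V'_g|` vertices
of `V_g` unmatched; the choice is made by embedding each fibre of the group map separately.
As `M*` covers exactly `2|M*|` vertices, the weight is
`(2M)|M*| - ∑ p_e + M(n - 2|M*|) = nM - ∑ p_e`. -/

open Finset

def IsMatching {X : Type*} (EX M : Finset (Sym2 X)) : Prop :=
  M ⊆ EX ∧ ∀ e ∈ M, ∀ e' ∈ M, e ≠ e' → ∀ x : X, ¬(x ∈ e ∧ x ∈ e')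

theorem Function.Embedding.exists_comp_eq_of_card_fiber_le {α β ι : Type*} [Fintype α]
    [Fintype β] [DecidableEq ι] (f : α → ι) (g : β → ι)
    (h : ∀ i, Fintype.card {a // f a = i} ≤ Fintype.card {b // g b = i}) :
    ∃ F : α ↪ β, ∀ a, g (F a) = f a := by
  have e i := (Function.Embedding.nonempty_of_card_le (h i)).some
  refine ⟨(Equiv.sigmaFiberEquiv f).symm.toEmbedding.trans
    ((Function.Embedding.sigmaMap (Function.Embedding.refl ι) e).trans
      (Equiv.sigmaFiberEquiv g).toEmbedding), fun a => ?_⟩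
  exact (e (f a) ⟨a, rfl⟩).2

theorem Finset.card_filter_and_not_le_sub {α : Type*} [Fintype α] (p q : α → Prop)
    [DecidablePred p] [DecidablePred q] {k : ℕ} (hk : k ≤ #{x | p x ∧ q x}) :
    #{x | p x ∧ ¬ q x} ≤ #{x | p x} - k := by
  have := card_filter_add_card_filter_not (s := ({x | p x} : Finset α)) q
  simp only [filter_filter] at this
  omega

theorem exists_embedding_compl_comp_eq_of_card_fiber {X Y ι : Type*} [Fintype X] [Fintype Y]
    [DecidableEq X] [DecidableEq ι] (f : X → ι) (g : Y → ι) (s : Finset X) (ρ : ι → ℕ)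
    (hg : ∀ i, #{y | g y = i} = #{x | f x = i} - ρ i) (hs : ∀ i, ρ i ≤ #{x | f x = i ∧ x ∈ s}) :
    ∃ F : {x // x ∉ s} ↪ Y, ∀ x, g (F x) = f x :=
  Function.Embedding.exists_comp_eq_of_card_fiber_le _ _ fun i => by
    rw [Fintype.card_congr (Equiv.subtypeSubtypeEquivSubtypeInter (· ∉ s) (f · = i)),
      Fintype.card_subtype, Fintype.card_subtype, hg]
    simp_rw [and_comm (a := _ ∉ s)]
    exact card_filter_and_not_le_sub _ _ (hs i)

def matchedVertices {X : Type*} [DecidableEq X] (M : Finset (Sym2 X)) : Finset X :=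
  M.biUnion Sym2.toFinset

theorem mem_matchedVertices {X : Type*} [DecidableEq X] {M : Finset (Sym2 X)} {x : X} :
    x ∈ matchedVertices M ↔ ∃ e ∈ M, x ∈ e := by
  simp [matchedVertices, Sym2.mem_toFinset]

def VertexDisjoint {X : Type*} (M M' : Finset (Sym2 X)) : Prop :=
  ∀ e ∈ M, ∀ e' ∈ M', ∀ x, ¬(x ∈ e ∧ x ∈ e')

theorem VertexDisjoint.disjoint {X : Type*} {M M' : Finset (Sym2 X)} (h : VertexDisjoint M M') :
    Disjoint M M' :=
  disjoint_left.2 fun e he he' => h e he e he' _ ⟨e.out_fst_mem, e.out_fst_mem⟩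

namespace IsMatching

variable {X : Type*} {E M : Finset (Sym2 X)}

theorem mono {E' : Finset (Sym2 X)} (h : IsMatching E M) (hE : E ⊆ E') : IsMatching E' M :=
  ⟨h.1.trans hE, h.2⟩

theorem union [DecidableEq X] {M' : Finset (Sym2 X)} (h : IsMatching E M) (h' : IsMatching E M')
    (hdisj : VertexDisjoint M M') : IsMatching E (M ∪ M') := by
  refine ⟨union_subset h.1 h'.1, fun e he e' he' hne x hx => ?_⟩
  rcases mem_union.1 he with he | he <;> rcases mem_union.1 he' with he' | he'
  · exact h.2 e he e' he' hne x hx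
  · exact hdisj e he e' he' x hx
  · exact hdisj e' he' e he x hx.symm
  · exact h'.2 e he e' he' hne x hx

theorem image_map {Y : Type*} [DecidableEq Y] {f : X → Y} (hf : Function.Injective f)
    (h : IsMatching E M) : IsMatching (E.image (Sym2.map f)) (M.image (Sym2.map f)) := by
  refine ⟨image_subset_image h.1, ?_⟩
  simp only [mem_image]
  rintro _ ⟨e, he, rfl⟩ _ ⟨e', he', rfl⟩ hne y ⟨hy, hy'⟩
  obtain ⟨x, hx, rfl⟩ := Sym2.mem_map.1 hy
  obtain ⟨x', hx', hxx'⟩ := Sym2.mem_map.1 hy'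
  obtain rfl := hf hxx'
  exact h.2 e he e' he' (fun h => hne (h ▸ rfl)) x' ⟨hx, hx'⟩

theorem card_matchedVertices [DecidableEq X] (h : IsMatching E M) (hM : ∀ e ∈ M, ¬e.IsDiag) :
    #(matchedVertices M) = 2 * #M := by
  rw [matchedVertices, card_biUnion,
    sum_congr rfl fun e he => Sym2.card_toFinset_of_not_isDiag e (hM e he), sum_const,
    smul_eq_mul, mul_comm]
  intro e he e' he' hne
  exact disjoint_left.2 fun x hx hx' =>
    h.2 e he e' he' hne x ⟨Sym2.mem_toFinset.1 hx, Sym2.mem_toFinset.1 hx'⟩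

end IsMatching

theorem isMatching_image_inl_inr {ι V W : Type*} [Fintype ι] [DecidableEq V] [DecidableEq W]
    {i : ι → V} {j : ι → W} (hi : Function.Injective i) (hj : Function.Injective j) :
    IsMatching (univ.image fun x => s(Sum.inl (i x), Sum.inr (j x)))
      (univ.image fun x => s(Sum.inl (i x), Sum.inr (j x))) := by
  refine ⟨subset_rfl, ?_⟩
  simp only [mem_image, mem_univ, true_and]
  rintro _ ⟨x, rfl⟩ _ ⟨y, rfl⟩ hne z ⟨hx, hy⟩
  rw [Sym2.mem_iff] at hx hy
  rcases hx with rfl | rfl <;> rcases hy with h | h <;>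
    simp only [Sum.inl.injEq, Sum.inr.injEq, reduceCtorEq] at h
  · exact hne (hi h ▸ rfl)
  · exact hne (hj h ▸ rfl)

section matchingExtension

variable {X Y : Type*} [Fintype X] [DecidableEq X] [DecidableEq Y]
  (M : Finset (Sym2 X)) (F : {x // x ∉ matchedVertices M} ↪ Y)

def matchingExtension : Finset (Sym2 (X ⊕ Y)) :=
  M.image (Sym2.map Sum.inl) ∪ univ.image fun x => s(Sum.inl x.1, Sum.inr (F x))

theorem image_inl_subset_matchingExtension :
    M.image (Sym2.map Sum.inl) ⊆ matchingExtension M F :=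
  subset_union_left

theorem vertexDisjoint_image_inl_image_inl_inr :
    VertexDisjoint (M.image (Sym2.map Sum.inl))
      (univ.image fun x => s(Sum.inl x.1, Sum.inr (F x))) := by
  simp only [VertexDisjoint, mem_image, mem_univ, true_and]
  rintro _ ⟨e, he, rfl⟩ _ ⟨x, rfl⟩ z ⟨hz, hz'⟩
  obtain ⟨y, hy, rfl⟩ := Sym2.mem_map.1 hz
  rw [Sym2.mem_iff, Sum.inl.injEq] at hz'
  obtain rfl | h := hz'
  · exact x.2 (mem_matchedVertices.2 ⟨e, he, hy⟩)
  · exact Sum.inl_ne_inr h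

variable {M} in
theorem IsMatching.matchingExtension {E : Finset (Sym2 X)} {E' : Finset (Sym2 (X ⊕ Y))}
    (h : IsMatching E M) (hE : ∀ e ∈ E, e.map Sum.inl ∈ E')
    (hF : ∀ x, s(Sum.inl x.1, Sum.inr (F x)) ∈ E') : IsMatching E' (matchingExtension M F) := by
  refine ((h.image_map Sum.inl_injective).mono ?_).union
    ((isMatching_image_inl_inr Subtype.val_injective F.injective).mono ?_)
    (vertexDisjoint_image_inl_image_inl_inr M F)
  · intro _ h
    obtain ⟨e, he, rfl⟩ := mem_image.1 h
    exact hE e he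
  · intro _ h
    obtain ⟨x, -, rfl⟩ := mem_image.1 h
    exact hF x

theorem exists_mem_matchingExtension (x : X) : ∃ e ∈ matchingExtension M F, Sum.inl x ∈ e := by
  by_cases hx : x ∈ matchedVertices M
  · obtain ⟨e, he, hxe⟩ := mem_matchedVertices.1 hx
    exact ⟨_, mem_union_left _ (mem_image_of_mem _ he), Sym2.mem_map.2 ⟨x, hxe, rfl⟩⟩
  · exact ⟨_, mem_union_right _ (mem_image_of_mem _ (mem_univ ⟨x, hx⟩)), Sym2.mem_mk_left _ _⟩

theorem sum_matchingExtension {R : Type*} [AddCommMonoid R] (w : Sym2 (X ⊕ Y) → R) :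
    ∑ e ∈ matchingExtension M F, w e =
      ∑ e ∈ M, w (e.map Sum.inl) + ∑ x, w s(Sum.inl x.1, Sum.inr (F x)) := by
  rw [matchingExtension,
    sum_union (vertexDisjoint_image_inl_image_inl_inr M F).disjoint,
    sum_image (Sym2.map.injective Sum.inl_injective).injOn,
    sum_image fun x _ y _ h => by simp_all]

end matchingExtension

open scoped Classical in
theorem budgeted_matching_extension_general
    {V A : Type*} [Fintype V] [Fintype A] [DecidableEq V] [DecidableEq A]
    (ω : ℕ) (part : V → Fin ω) (grp : A → Fin ω) (ρ : Fin ω → ℕ)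
    (haux : ∀ g, (univ.filter fun a => grp a = g).card
        = (univ.filter fun v => part v = g).card - ρ g)
    (EG : Finset (Sym2 V)) (hEGsimple : ∀ e ∈ EG, ¬ e.IsDiag)
    (p : Sym2 V → ℝ)
    (M : ℝ)
    (EH : Finset (Sym2 (V ⊕ A)))
    (hEH : ∀ e : Sym2 (V ⊕ A), e ∈ EH ↔
      (∃ e0 ∈ EG, e = e0.map Sum.inl) ∨
      (∃ (v : V) (a : A), part v = grp a ∧ e = s(Sum.inl v, Sum.inr a)))
    (wH : Sym2 (V ⊕ A) → ℝ)
    (hwH1 : ∀ e0 ∈ EG, wH (e0.map Sum.inl) = 2 * M - p e0)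
    (hwH2 : ∀ (v : V) (a : A), wH s(Sum.inl v, Sum.inr a) = M)
    (Mstar : Finset (Sym2 V)) (hMstar : IsMatching EG Mstar)
    (hcov : ∀ g, ρ g ≤ (univ.filter fun v => part v = g ∧ ∃ e ∈ Mstar, v ∈ e).card) :
    ∃ MH : Finset (Sym2 (V ⊕ A)),
      IsMatching EH MH ∧
      Mstar.image (Sym2.map Sum.inl) ⊆ MH ∧
      (∀ v : V, ∃ e ∈ MH, (Sum.inl v : V ⊕ A) ∈ e) ∧
      ∑ e ∈ MH, wH e = (Fintype.card V : ℝ) * M - ∑ e ∈ Mstar, p e := by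
  simp_rw [← mem_matchedVertices] at hcov
  obtain ⟨F, hF⟩ := exists_embedding_compl_comp_eq_of_card_fiber part grp _ ρ haux hcov
  refine ⟨matchingExtension Mstar F,
    hMstar.matchingExtension F (fun e he => (hEH _).2 (Or.inl ⟨e, he, rfl⟩))
      (fun v => (hEH _).2 (Or.inr ⟨v, F v, (hF v).symm, rfl⟩)),
    image_inl_subset_matchingExtension Mstar F, exists_mem_matchingExtension Mstar F, ?_⟩
  have hcard : #(matchedVertices Mstar) + Fintype.card {v // v ∉ matchedVertices Mstar} =
      Fintype.card V := by
    simp [Fintype.card_subtype_compl, card_le_univ]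
  rw [sum_matchingExtension, sum_congr rfl fun e he => hwH1 e (hMstar.1 he),
    sum_congr rfl fun v _ => hwH2 v.1 (F v), sum_sub_distrib, sum_const, sum_const, card_univ,
    ← hcard, hMstar.card_matchedVertices fun e he => hEGsimple e (hMstar.1 he)]
  push_cast
  simp only [nsmul_eq_mul]
  ring

open scoped Classical in
/-- in the construction of `H` from `G` (auxiliary vertices `V'_g` of size
`|V_g| − ρ_g` joined to all of `V_g` by weight-`M` edges, original edges reweighted to
`2M − p_e`, with `M > ∑_e p_e`), any matching `M*` of `G` matching at least `ρ_g`
vertices of each group `V_g` extends to a matching of `H` matching every vertex of `V`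
whose total `H`-weight is `n·M − ∑_{e∈M*} p_e`. -/
theorem budgeted_matching_extension
    {V A : Type*} [Fintype V] [Fintype A] [DecidableEq V] [DecidableEq A]
    (ω : ℕ) (part : V → Fin ω) (grp : A → Fin ω) (ρ : Fin ω → ℕ)
    (hρ : ∀ g, ρ g ≤ (univ.filter fun v => part v = g).card)
    (haux : ∀ g, (univ.filter fun a => grp a = g).card
        = (univ.filter fun v => part v = g).card - ρ g)
    (EG : Finset (Sym2 V)) (hEGsimple : ∀ e ∈ EG, ¬ e.IsDiag)
    (p : Sym2 V → ℝ) (hp : ∀ e, 0 ≤ p e)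
    (M : ℝ) (hM : ∑ e ∈ EG, p e < M)
    (EH : Finset (Sym2 (V ⊕ A)))
    (hEH : ∀ e : Sym2 (V ⊕ A), e ∈ EH ↔
      (∃ e0 ∈ EG, e = e0.map Sum.inl) ∨
      (∃ (v : V) (a : A), part v = grp a ∧ e = s(Sum.inl v, Sum.inr a)))
    (wH : Sym2 (V ⊕ A) → ℝ)
    (hwH1 : ∀ e0 ∈ EG, wH (e0.map Sum.inl) = 2 * M - p e0)
    (hwH2 : ∀ (v : V) (a : A), wH s(Sum.inl v, Sum.inr a) = M)
    (Mstar : Finset (Sym2 V)) (hMstar : IsMatching EG Mstar)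
    (hcov : ∀ g, ρ g ≤ (univ.filter fun v => part v = g ∧ ∃ e ∈ Mstar, v ∈ e).card) :
    ∃ MH : Finset (Sym2 (V ⊕ A)),
      IsMatching EH MH ∧
      Mstar.image (Sym2.map Sum.inl) ⊆ MH ∧
      (∀ v : V, ∃ e ∈ MH, (Sum.inl v : V ⊕ A) ∈ e) ∧
      ∑ e ∈ MH, wH e = (Fintype.card V : ℝ) * M - ∑ e ∈ Mstar, p e :=
  budgeted_matching_extension_general ω part grp ρ haux EG hEGsimple p M EH hEH wH hwH1 hwH2 Mstar
    hMstar hcov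
end

section
/- In the construction of H from G above (original edges of weight 2M−p_e with M > ∑_e p_e ≥ 0, auxiliary edges of weight M joining V'_g to V_g with |V'_g| = |V_g|−ρ_g), any matching in H whose total weight exceeds (n−1)M must match every vertex of V, and consequently matches at least ρ_g vertices of each group V_g via original edges of G. -/
open Finset

/-!
An original edge covers two vertices of `V` and weighs at most `2M`; an auxiliary edge covers
one and weighs `M`. Since matching edges cover disjoint sets of vertices, a matching weighs at
most `M` times the number of vertices of `V` it covers, so weight above `(n - 1) M` forces it to
cover all of `V`. In a group `V_g`, the vertices matched by auxiliary edges have pairwise distinct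
partners in `V'_g`, so there are at most `|V_g| - ρ_g` of them; the other at least `ρ_g` vertices
of `V_g` are matched by original edges.
-/

namespace IsMatching

variable {X : Type*} {EX M : Finset (Sym2 X)}

theorem eq_of_mem_of_mem (hM : IsMatching EX M) {e e' : Sym2 X} (he : e ∈ M) (he' : e' ∈ M)
    {x : X} (hxe : x ∈ e) (hxe' : x ∈ e') : e = e' := by
  by_contra hne
  exact hM.2 e he e' he' hne x ⟨hxe, hxe'⟩

theorem pairwiseDisjoint_filter_mem {Y : Type*} [Fintype Y] [DecidableEq X]
    (hM : IsMatching EX M) (f : Y → X) :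
    (M : Set (Sym2 X)).PairwiseDisjoint fun e => univ.filter fun y => f y ∈ e := by
  intro e he e' he' hne
  simp only [Function.onFun, disjoint_left, mem_filter, mem_univ, true_and]
  exact fun y hye hye' => hne (hM.eq_of_mem_of_mem he he' hye hye')

theorem card_le_card_of_forall_exists_mk_mem {Y Z : Type*} (hM : IsMatching EX M)
    {f : Y → X} (hf : f.Injective) (g : Z → X) {s : Finset Y} {t : Finset Z}
    (hst : ∀ y ∈ s, ∃ z ∈ t, s(f y, g z) ∈ M) : #s ≤ #t :=
  card_le_card_of_forall_subsingleton (fun y z => s(f y, g z) ∈ M) hst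
    fun _ _ _ hy _ hy' => hf <| Sym2.congr_left.1 <|
      hM.eq_of_mem_of_mem hy.2 hy'.2 (Sym2.mem_mk_right _ _) (Sym2.mem_mk_right _ _)

end IsMatching

theorem Finset.sum_le_card_biUnion_mul {ι Y R : Type*} [DecidableEq Y] [Semiring R]
    [PartialOrder R] [IsOrderedRing R] {s : Finset ι} {t : ι → Finset Y} {w : ι → R} {c : R}
    (ht : (s : Set ι).PairwiseDisjoint t) (hw : ∀ i ∈ s, w i ≤ #(t i) * c) :
    ∑ i ∈ s, w i ≤ #(s.biUnion t) * c := by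
  rw [card_biUnion ht, Nat.cast_sum, sum_mul]
  exact sum_le_sum hw

theorem Finset.eq_univ_of_card_sub_one_mul_lt {Y : Type*} [Fintype Y] {T : Finset Y} {c : ℝ}
    (hc : 0 ≤ c) (h : ((Fintype.card Y : ℝ) - 1) * c < #T * c) : T = univ := by
  by_contra hT
  have hlt : #T + 1 ≤ Fintype.card Y := (card_lt_iff_ne_univ T).2 hT
  have hle : (#T : ℝ) ≤ Fintype.card Y - 1 := by
    rw [le_sub_iff_add_le]
    exact_mod_cast hlt
  exact (mul_le_mul_of_nonneg_right hle hc).not_gt h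

section Construction

variable {V A : Type*} {ω : ℕ} {part : V → Fin ω} {grp : A → Fin ω} {EG : Finset (Sym2 V)}

/-- The edges of `H`, where `V_g` and `V'_g` are the fibres of `part` and `grp` over `g`. -/
def IsAugmentedEdge (EG : Finset (Sym2 V)) (part : V → Fin ω) (grp : A → Fin ω)
    (e : Sym2 (V ⊕ A)) : Prop :=
  (∃ e0 ∈ EG, e = e0.map Sum.inl) ∨
    ∃ (v : V) (a : A), part v = grp a ∧ e = s(Sum.inl v, Sum.inr a)

section
variable [Fintype V] [DecidableEq V] [DecidableEq A]

theorem card_filter_inl_mem_map_inl {e0 : Sym2 V} (h : ¬e0.IsDiag) :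
    #{v | (Sum.inl v : V ⊕ A) ∈ e0.map Sum.inl} = 2 := by
  induction e0 using Sym2.ind with
  | _ a b =>
    have hab : a ≠ b := by simpa [Sym2.mk_isDiag_iff] using h
    have hsupp : ({v | (Sum.inl v : V ⊕ A) ∈ s(a, b).map Sum.inl} : Finset V) = {a, b} := by
      ext v
      simp only [mem_filter, mem_univ, true_and, Sym2.map_mk, Sym2.mem_iff, Sum.inl.injEq,
        mem_insert, mem_singleton]
    rw [hsupp, card_pair hab]

theorem filter_inl_mem_mk_inl_inr (v : V) (a : A) :
    ({u | (Sum.inl u : V ⊕ A) ∈ s(Sum.inl v, Sum.inr a)} : Finset V) = {v} := by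
  ext u
  simp [Sym2.mem_iff]

theorem IsAugmentedEdge.weight_le_card_filter_inl_mem_mul {e : Sym2 (V ⊕ A)}
    (he : IsAugmentedEdge EG part grp e) (hEGsimple : ∀ e ∈ EG, ¬e.IsDiag)
    {p : Sym2 V → ℝ} (hp : ∀ e, 0 ≤ p e) {M : ℝ} {wH : Sym2 (V ⊕ A) → ℝ}
    (hwH1 : ∀ e0 ∈ EG, wH (e0.map Sum.inl) = 2 * M - p e0)
    (hwH2 : ∀ (v : V) (a : A), wH s(Sum.inl v, Sum.inr a) = M) :
    wH e ≤ #{v | Sum.inl v ∈ e} * M := by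
  rcases he with ⟨e0, he0, rfl⟩ | ⟨v, a, -, rfl⟩
  · rw [card_filter_inl_mem_map_inl (hEGsimple e0 he0), hwH1 e0 he0]
    push_cast
    linarith [hp e0]
  · rw [filter_inl_mem_mk_inl_inr, card_singleton, hwH2, Nat.cast_one, one_mul]

end

theorem IsAugmentedEdge.exists_map_inl_or_mk_inr_of_inl_mem {e : Sym2 (V ⊕ A)}
    (he : IsAugmentedEdge EG part grp e) {v : V} (hv : Sum.inl v ∈ e) :
    (∃ e0 ∈ EG, e = e0.map Sum.inl ∧ v ∈ e0) ∨
      ∃ a, part v = grp a ∧ e = s(Sum.inl v, Sum.inr a) := by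
  rcases he with ⟨e0, he0, rfl⟩ | ⟨u, a, hua, rfl⟩
  · obtain ⟨u, hu, huv⟩ := Sym2.mem_map.1 hv
    exact Or.inl ⟨e0, he0, rfl, Sum.inl_injective huv ▸ hu⟩
  · obtain rfl : v = u := by simpa [Sym2.mem_iff] using hv
    exact Or.inr ⟨a, hua, rfl⟩

end Construction

open scoped Classical in
/-- in the construction of `H` from `G`, any matching in `H` of total weight
exceeding `(n−1)·M` matches every vertex of `V`, and consequently matches at least `ρ_g`
vertices of each group `V_g` via original edges of `G`. -/
theorem heavy_matching_covers
    {V A : Type*} [Fintype V] [Fintype A] [DecidableEq V] [DecidableEq A]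
    (ω : ℕ) (part : V → Fin ω) (grp : A → Fin ω) (ρ : Fin ω → ℕ)
    (hρ : ∀ g, ρ g ≤ (univ.filter fun v => part v = g).card)
    (haux : ∀ g, (univ.filter fun a => grp a = g).card
        = (univ.filter fun v => part v = g).card - ρ g)
    (EG : Finset (Sym2 V)) (hEGsimple : ∀ e ∈ EG, ¬ e.IsDiag)
    (p : Sym2 V → ℝ) (hp : ∀ e, 0 ≤ p e)
    (M : ℝ) (hM : ∑ e ∈ EG, p e < M)
    (EH : Finset (Sym2 (V ⊕ A)))
    (hEH : ∀ e : Sym2 (V ⊕ A), e ∈ EH ↔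
      (∃ e0 ∈ EG, e = e0.map Sum.inl) ∨
      (∃ (v : V) (a : A), part v = grp a ∧ e = s(Sum.inl v, Sum.inr a)))
    (wH : Sym2 (V ⊕ A) → ℝ)
    (hwH1 : ∀ e0 ∈ EG, wH (e0.map Sum.inl) = 2 * M - p e0)
    (hwH2 : ∀ (v : V) (a : A), wH s(Sum.inl v, Sum.inr a) = M)
    (MH : Finset (Sym2 (V ⊕ A))) (hMH : IsMatching EH MH)
    (hheavy : ((Fintype.card V : ℝ) - 1) * M < ∑ e ∈ MH, wH e) :
    (∀ v : V, ∃ e ∈ MH, (Sum.inl v : V ⊕ A) ∈ e) ∧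
    (∀ g, ρ g ≤ (univ.filter fun v =>
        part v = g ∧ ∃ e0 ∈ EG, Sym2.map Sum.inl e0 ∈ MH ∧ v ∈ e0).card) := by
  have hedge : ∀ e ∈ MH, IsAugmentedEdge EG part grp e := fun e he => (hEH e).1 (hMH.1 he)
  have hM0 : 0 ≤ M := (sum_nonneg fun e _ => hp e).trans hM.le
  have hcover : ∀ v : V, ∃ e ∈ MH, (Sum.inl v : V ⊕ A) ∈ e := by
    have hbound := sum_le_card_biUnion_mul (hMH.pairwiseDisjoint_filter_mem Sum.inl)
      fun e he => (hedge e he).weight_le_card_filter_inl_mem_mul hEGsimple hp hwH1 hwH2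
    have hall := eq_univ_of_card_sub_one_mul_lt hM0 (hheavy.trans_le hbound)
    intro v
    simpa using (eq_univ_iff_forall.1 hall v)
  refine ⟨hcover, fun g => ?_⟩
  set orig := univ.filter fun v =>
    part v = g ∧ ∃ e0 ∈ EG, Sym2.map Sum.inl e0 ∈ MH ∧ v ∈ e0
  set aux := univ.filter fun v => part v = g ∧ ∃ a, grp a = g ∧ s(Sum.inl v, Sum.inr a) ∈ MH
  have hsplit : univ.filter (fun v => part v = g) ⊆ orig ∪ aux := by
    intro v hv
    obtain ⟨e, he, hve⟩ := hcover v
    simp only [mem_filter, mem_univ, true_and] at hv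
    rcases (hedge e he).exists_map_inl_or_mk_inr_of_inl_mem hve with
      ⟨e0, he0, rfl, hv0⟩ | ⟨a, hva, rfl⟩
    · exact mem_union_left _ (mem_filter.2 ⟨mem_univ v, hv, e0, he0, he, hv0⟩)
    · exact mem_union_right _ (mem_filter.2 ⟨mem_univ v, hv, a, hva ▸ hv, he⟩)
  have haux_le : #aux ≤ #(univ.filter fun a => grp a = g) :=
    hMH.card_le_card_of_forall_exists_mk_mem Sum.inl_injective Sum.inr fun v hv => by
      obtain ⟨-, -, a, hag, ha⟩ := mem_filter.1 hv
      exact ⟨a, mem_filter.2 ⟨mem_univ a, hag⟩, ha⟩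
  have hgroup_le := (card_le_card hsplit).trans (card_union_le _ _)
  have hρg := hρ g
  have hauxg := haux g
  omega
end

section
/- With the same construction of H from G (M > ∑_e p_e), let M_H be a maximum weight matching in H, assume some matching of G matches at least ρ_g vertices of each V_g (feasibility), and let M = M_H ∩ E(G). Then ∑_{e∈M} p_e equals the minimum of ∑_{e∈M'} p_e over all matchings M' of G matching at least ρ_g vertices of each V_g. -/
open Finset

/-!
Each edge `e₀` of `G` has weight `2M - p e₀` in `H` and covers two vertices of `V`, each edge
between `V_g` and `V'_g` has weight `M` and covers one, so a matching of `H` covering `k` vertices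
of `V` has weight `k M - p(trace) ≤ k M`. A feasible matching of `G` extends to a matching of `H`
covering all of `V`: the at most `|V_g| - ρ_g` uncovered vertices of `V_g` are matched injectively
into `V'_g`. Since `p(E(G)) < M`, a maximum weight matching must then cover all of `V`, its
weight is `n M - p(trace)`, and comparing with the extensions of feasible matchings shows that the
trace has minimum `p`-weight. The trace is itself feasible because at most `|V'_g| = |V_g| - ρ_g`
vertices of `V_g` can be matched into `V'_g`.
-/

section General

variable {X Y : Type*}

-- The domain is the subtype `s`, not `X`, so that `Y` may be empty.
theorem exists_injective_fiberwise {ι : Type*} [Fintype Y] [DecidableEq ι] (s : Finset X)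
    (f : X → ι) (g : Y → ι) (hcard : ∀ i, #{x ∈ s | f x = i} ≤ #{y | g y = i}) :
    ∃ φ : s → Y, Function.Injective φ ∧ ∀ x, g (φ x) = f x := by
  classical
  rcases isEmpty_or_nonempty Y with hY | hY
  · have : IsEmpty s := ⟨fun x => by
      simpa [univ_eq_empty] using (hcard (f x)).trans_lt' (card_pos.mpr ⟨x, by simp⟩)⟩
    exact ⟨isEmptyElim, fun x => isEmptyElim x, fun x => isEmptyElim x⟩
  choose φ hmaps hinj using fun i => Set.Finite.exists_injOn_of_encard_le
    (s := (({x ∈ s | f x = i} : Finset X) : Set X)) (t := (({y | g y = i} : Finset Y) : Set Y))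
    (finite_toSet _) (by simpa only [Set.encard_coe_eq_coe_finsetCard, Nat.cast_le] using hcard i)
  have hfib : ∀ x : s, g (φ (f x) x) = f x := fun x => by
    simpa using hmaps (f x) (by simp)
  refine ⟨fun x => φ (f x) x, fun x x' h => ?_, hfib⟩
  have hf : f x = f x' := (hfib x).symm.trans ((congrArg g h).trans (hfib x'))
  simp only [hf] at h
  exact Subtype.ext (hinj (f x') (by simp [← hf]) (by simp) h)

theorem IsMatching.card_filter_exists_mem_eq_sum [Fintype Y] [DecidableEq X]
    {EX N : Finset (Sym2 X)} (hN : IsMatching EX N) (ι : Y → X) :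
    #{y | ∃ e ∈ N, ι y ∈ e} = ∑ e ∈ N, #{y | ι y ∈ e} := by
  classical
  rw [← card_biUnion]
  · congr 1
    ext y
    simp
  · intro e he e' he' hne
    simp only [disjoint_left, mem_filter, mem_univ, true_and]
    exact fun y hy hy' => hN.2 e he e' he' hne (ι y) ⟨hy, hy'⟩

theorem IsMatching.comap [DecidableEq Y] {EX : Finset (Sym2 X)} {EY N : Finset (Sym2 Y)}
    (hN : IsMatching EY N) {f : X → Y} (hf : Function.Injective f) :
    IsMatching EX {e ∈ EX | e.map f ∈ N} := by
  refine ⟨filter_subset _ _, fun e he e' he' hne x hx => ?_⟩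
  simp only [mem_filter] at he he'
  exact hN.2 _ he.2 _ he'.2 (fun h => hne (Sym2.map.injective hf h)) (f x)
    ⟨Sym2.mem_map.mpr ⟨x, hx.1, rfl⟩, Sym2.mem_map.mpr ⟨x, hx.2, rfl⟩⟩

theorem IsMatching.card_matched_le [DecidableEq X] [DecidableEq Y]
    {E N : Finset (Sym2 (X ⊕ Y))} (hN : IsMatching E N) (s : Finset X) (t : Finset Y) :
    #{x ∈ s | ∃ y ∈ t, s(Sum.inl x, Sum.inr y) ∈ N} ≤ #t := by
  refine card_le_card_of_forall_subsingleton (fun x y => s(Sum.inl x, Sum.inr y) ∈ N)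
    (fun x hx => by simpa using (mem_filter.mp hx).2) fun y _ x hx x' hx' => ?_
  by_contra hne
  refine hN.2 _ hx.2 _ hx'.2 (fun h => hne ?_) (Sum.inr y)
    ⟨Sym2.mem_mk_right _ _, Sym2.mem_mk_right _ _⟩
  simpa using h

theorem IsMatching.union_s9 {E N₁ N₂ : Finset (Sym2 X)} [DecidableEq X] (h₁ : IsMatching E N₁)
    (h₂ : IsMatching E N₂) (h₁₂ : ∀ e ∈ N₁, ∀ e' ∈ N₂, ∀ x, ¬(x ∈ e ∧ x ∈ e')) :
    IsMatching E (N₁ ∪ N₂) := by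
  refine ⟨union_subset h₁.1 h₂.1, fun e he e' he' hne x hx => ?_⟩
  rcases mem_union.mp he with he | he <;> rcases mem_union.mp he' with he' | he'
  · exact h₁.2 e he e' he' hne x hx
  · exact h₁₂ e he e' he' x hx
  · exact h₁₂ e' he' e he x hx.symm
  · exact h₂.2 e he e' he' hne x hx

theorem IsMatching.image [DecidableEq Y] {EX N : Finset (Sym2 X)} {EY : Finset (Sym2 Y)}
    (hN : IsMatching EX N) {f : X → Y} (hf : Function.Injective f)
    (hE : ∀ e ∈ EX, e.map f ∈ EY) :
    IsMatching EY (N.image (Sym2.map f)) := by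
  refine ⟨fun e he => ?_, fun e he e' he' hne y hy => ?_⟩
  · obtain ⟨e₀, he₀, rfl⟩ := mem_image.mp he
    exact hE e₀ (hN.1 he₀)
  obtain ⟨e₀, he₀, rfl⟩ := mem_image.mp he
  obtain ⟨e₀', he₀', rfl⟩ := mem_image.mp he'
  obtain ⟨x, hx, rfl⟩ := Sym2.mem_map.mp hy.1
  have hx' : x ∈ e₀' := by simpa [Sym2.mem_map, hf.eq_iff] using hy.2
  exact hN.2 e₀ he₀ e₀' he₀' (fun h => hne (h ▸ rfl)) x ⟨hx, hx'⟩

theorem isMatching_image_inl_inr_s9 {Z : Type*} [Fintype Z] [DecidableEq X] [DecidableEq Y]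
    {E : Finset (Sym2 (X ⊕ Y))} {f : Z → X} {g : Z → Y} (hf : Function.Injective f)
    (hg : Function.Injective g) (hE : ∀ z, s(Sum.inl (f z), Sum.inr (g z)) ∈ E) :
    IsMatching E (univ.image fun z => s(Sum.inl (f z), Sum.inr (g z))) := by
  refine ⟨fun e he => ?_, fun e he e' he' hne x hx => hne ?_⟩
  · obtain ⟨z, -, rfl⟩ := mem_image.mp he
    exact hE z
  obtain ⟨z, -, rfl⟩ := mem_image.mp he
  obtain ⟨z', -, rfl⟩ := mem_image.mp he'
  suffices z = z' by rw [this]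
  rcases x with x | y <;> simp only [Sym2.mem_iff, Sum.inl.injEq, Sum.inr.injEq, reduceCtorEq,
    or_false, false_or] at hx
  · exact hf (hx.1.symm.trans hx.2)
  · exact hg (hx.1.symm.trans hx.2)

end General

section Construction

variable {V A : Type*} {ω : ℕ}

-- The edge set of `H`; `A` is the disjoint union of the `V'_g`, with `grp a = g` iff `a ∈ V'_g`.
def IsAuxEdgeSet (part : V → Fin ω) (grp : A → Fin ω) (EG : Finset (Sym2 V))
    (EH : Finset (Sym2 (V ⊕ A))) : Prop :=
  ∀ e : Sym2 (V ⊕ A), e ∈ EH ↔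
    (∃ e0 ∈ EG, e = e0.map Sum.inl) ∨
    (∃ (v : V) (a : A), part v = grp a ∧ e = s(Sum.inl v, Sum.inr a))

variable [Fintype V] [DecidableEq V] [DecidableEq A] {part : V → Fin ω} {grp : A → Fin ω}
  {EG : Finset (Sym2 V)} {EH : Finset (Sym2 (V ⊕ A))} {p : Sym2 V → ℝ} {M : ℝ}
  {wH : Sym2 (V ⊕ A) → ℝ}

theorem weight_eq_of_mem (hEH : IsAuxEdgeSet part grp EG EH) (hEG : ∀ e ∈ EG, ¬ e.IsDiag)
    (hw_inl : ∀ e0 ∈ EG, wH (e0.map Sum.inl) = 2 * M - p e0)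
    (hw_cross : ∀ (v : V) (a : A), wH s(Sum.inl v, Sum.inr a) = M)
    {e : Sym2 (V ⊕ A)} (he : e ∈ EH) :
    wH e = M * #{v | Sum.inl v ∈ e} - ∑ e0 ∈ EG with e0.map Sum.inl = e, p e0 := by
  have hinj := Sym2.map.injective (Sum.inl_injective (α := V) (β := A))
  rcases (hEH e).mp he with ⟨e0, he0, rfl⟩ | ⟨v, a, -, rfl⟩
  · have hends : #{v | Sum.inl v ∈ e0.map (Sum.inl (β := A))} = 2 := by
      rw [← e0.card_toFinset_of_not_isDiag (hEG e0 he0)]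
      congr 1
      ext v
      simp [Sym2.mem_map]
    have hfiber : {e ∈ EG | e.map Sum.inl = e0.map (Sum.inl (β := A))} = {e0} := by
      ext e
      simp only [mem_filter, hinj.eq_iff, mem_singleton]
      exact ⟨And.right, fun h => ⟨h ▸ he0, h⟩⟩
    rw [hw_inl e0 he0, hends, hfiber, sum_singleton]
    push_cast
    ring
  · have hends : #{w | (Sum.inl w : V ⊕ A) ∈ s(Sum.inl v, Sum.inr a)} = 1 := by
      rw [card_eq_one]
      exact ⟨v, by ext w; simp⟩
    have hfiber : {e ∈ EG | e.map Sum.inl = s(Sum.inl v, Sum.inr a)} = ∅ := by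
      refine filter_false_of_mem fun e _ h => ?_
      obtain ⟨w, -, hw⟩ := Sym2.mem_map.mp (h ▸ Sym2.mem_mk_right _ _ : Sum.inr a ∈ e.map Sum.inl)
      exact Sum.inl_ne_inr hw
    rw [hw_cross, hends, hfiber, sum_empty]
    norm_num

theorem IsMatching.sum_weight_eq (hEH : IsAuxEdgeSet part grp EG EH)
    (hEG : ∀ e ∈ EG, ¬ e.IsDiag)
    (hw_inl : ∀ e0 ∈ EG, wH (e0.map Sum.inl) = 2 * M - p e0)
    (hw_cross : ∀ (v : V) (a : A), wH s(Sum.inl v, Sum.inr a) = M)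
    {N : Finset (Sym2 (V ⊕ A))} (hN : IsMatching EH N) :
    ∑ e ∈ N, wH e =
      M * #{v | ∃ e ∈ N, Sum.inl v ∈ e} - ∑ e0 ∈ EG with e0.map Sum.inl ∈ N, p e0 := by
  have hfiber : ∀ e ∈ N, ∑ e0 ∈ EG with e0.map Sum.inl = e, p e0
      = ∑ e0 ∈ {e0 ∈ EG | e0.map Sum.inl ∈ N} with e0.map Sum.inl = e, p e0 := fun e he => by
    rw [filter_filter]
    exact sum_congr (filter_congr fun e0 _ => ⟨fun h => ⟨h ▸ he, h⟩, And.right⟩) fun _ _ => rfl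
  rw [sum_congr rfl fun e he => weight_eq_of_mem hEH hEG hw_inl hw_cross (hN.1 he),
    sum_sub_distrib, ← mul_sum, hN.card_filter_exists_mem_eq_sum, sum_congr rfl hfiber,
    sum_fiberwise_of_maps_to fun e0 he0 => (mem_filter.mp he0).2]
  push_cast
  rfl

theorem IsMatching.sum_weight_eq_of_forall_covered (hEH : IsAuxEdgeSet part grp EG EH)
    (hEG : ∀ e ∈ EG, ¬ e.IsDiag) (hw_inl : ∀ e0 ∈ EG, wH (e0.map Sum.inl) = 2 * M - p e0)
    (hw_cross : ∀ (v : V) (a : A), wH s(Sum.inl v, Sum.inr a) = M)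
    {N : Finset (Sym2 (V ⊕ A))} (hN : IsMatching EH N) (hall : ∀ v, ∃ e ∈ N, Sum.inl v ∈ e) :
    ∑ e ∈ N, wH e = Fintype.card V * M - ∑ e0 ∈ EG with e0.map Sum.inl ∈ N, p e0 := by
  rw [hN.sum_weight_eq hEH hEG hw_inl hw_cross, filter_true_of_mem fun v _ => hall v, card_univ,
    mul_comm]

theorem forall_covered_of_sum_weight_gt (hEH : IsAuxEdgeSet part grp EG EH)
    (hEG : ∀ e ∈ EG, ¬ e.IsDiag) (hp : ∀ e, 0 ≤ p e)
    (hw_inl : ∀ e0 ∈ EG, wH (e0.map Sum.inl) = 2 * M - p e0)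
    (hw_cross : ∀ (v : V) (a : A), wH s(Sum.inl v, Sum.inr a) = M) (hM : 0 < M)
    {N : Finset (Sym2 (V ⊕ A))} (hN : IsMatching EH N)
    (hgt : ((Fintype.card V : ℝ) - 1) * M < ∑ e ∈ N, wH e) (v : V) :
    ∃ e ∈ N, Sum.inl v ∈ e := by
  set C : Finset V := {v | ∃ e ∈ N, Sum.inl v ∈ e}
  suffices C = univ from (mem_filter.mp (this ▸ mem_univ v : v ∈ C)).2
  have hPtr : 0 ≤ ∑ e0 ∈ EG with e0.map Sum.inl ∈ N, p e0 := sum_nonneg fun e _ => hp e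
  rw [hN.sum_weight_eq hEH hEG hw_inl hw_cross] at hgt
  have hlt : (Fintype.card V : ℝ) < #C + 1 := by
    linarith [lt_of_mul_lt_mul_right (by linarith : ((Fintype.card V : ℝ) - 1) * M < #C * M) hM.le]
  have : Fintype.card V < #C + 1 := by exact_mod_cast hlt
  exact eq_univ_of_card C (le_antisymm (card_le_univ C) (by omega))

variable [Fintype A] {ρ : Fin ω → ℕ}

theorem exists_covering_extension (hEH : IsAuxEdgeSet part grp EG EH)
    (haux : ∀ g, #{a | grp a = g} = #{v | part v = g} - ρ g)
    {M' : Finset (Sym2 V)} (hM' : IsMatching EG M')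
    (hcov : ∀ g, ρ g ≤ #{v | part v = g ∧ ∃ e ∈ M', v ∈ e}) :
    ∃ N, IsMatching EH N ∧ (∀ v, ∃ e ∈ N, Sum.inl v ∈ e) ∧
      {e0 ∈ EG | e0.map Sum.inl ∈ N} = M' := by
  set U : Finset V := {v | ¬ ∃ e ∈ M', v ∈ e}
  have hU : ∀ g, #{v ∈ U | part v = g} ≤ #{a | grp a = g} := fun g => by
    have hsplit := card_filter_add_card_filter_not (s := ({v | part v = g} : Finset V))
      (fun v => ∃ e ∈ M', v ∈ e)
    simp only [filter_filter] at hsplit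
    have hUg : {v ∈ U | part v = g} = ({v | part v = g ∧ ¬ ∃ e ∈ M', v ∈ e} : Finset V) := by
      ext v; simp [U, and_comm]
    have := hcov g
    rw [hUg, haux g]
    omega
  obtain ⟨φ, hφ, hφg⟩ := exists_injective_fiberwise U part grp hU
  have hinl : Function.Injective (Sum.inl : V → V ⊕ A) := Sum.inl_injective
  set cross := univ.image fun u : U => s(Sum.inl (u : V), Sum.inr (φ u))
  have himage : IsMatching EH (M'.image (Sym2.map Sum.inl)) :=
    hM'.image hinl fun e0 he0 => (hEH _).mpr (Or.inl ⟨e0, he0, rfl⟩)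
  have hcross : IsMatching EH cross := isMatching_image_inl_inr_s9 Subtype.val_injective hφ
    fun u => (hEH _).mpr (Or.inr ⟨u, φ u, (hφg u).symm, rfl⟩)
  have hnot_cross : ∀ e0 : Sym2 V, e0.map Sum.inl ∉ cross := fun e0 h => by
    obtain ⟨u, -, hu⟩ := mem_image.mp h
    obtain ⟨w, -, hw⟩ :=
      Sym2.mem_map.mp (hu ▸ Sym2.mem_mk_right _ _ : Sum.inr (φ u) ∈ e0.map Sum.inl)
    exact Sum.inl_ne_inr hw
  refine ⟨_ ∪ cross, himage.union_s9 hcross ?_, fun v => ?_, ?_⟩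
  · rintro _ he e' he' (x | a) ⟨hx, hx'⟩
    · obtain ⟨e0, he0, rfl⟩ := mem_image.mp he
      obtain ⟨u, -, rfl⟩ := mem_image.mp he'
      have hxu : x = u := by simpa using hx'
      exact (mem_filter.mp u.2).2 ⟨e0, he0, by simpa [Sym2.mem_map, hxu] using hx⟩
    · obtain ⟨e0, -, rfl⟩ := mem_image.mp he
      simp [Sym2.mem_map] at hx
  · by_cases hv : ∃ e ∈ M', v ∈ e
    · obtain ⟨e, he, hve⟩ := hv
      exact ⟨e.map Sum.inl, mem_union_left _ (mem_image_of_mem _ he),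
        Sym2.mem_map.mpr ⟨v, hve, rfl⟩⟩
    · exact ⟨_, mem_union_right _ (mem_image_of_mem _ (mem_univ ⟨v, by simpa [U] using hv⟩)),
        Sym2.mem_mk_left _ _⟩
  · ext e0
    simp only [mem_filter, mem_union, hnot_cross, or_false,
      (Sym2.map.injective hinl).mem_finset_image]
    exact ⟨And.right, fun h => ⟨hM'.1 h, h⟩⟩

theorem trace_feasible (hEH : IsAuxEdgeSet part grp EG EH)
    (hρ : ∀ g, ρ g ≤ #{v | part v = g})
    (haux : ∀ g, #{a | grp a = g} = #{v | part v = g} - ρ g)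
    {N : Finset (Sym2 (V ⊕ A))} (hN : IsMatching EH N) (hall : ∀ v, ∃ e ∈ N, Sum.inl v ∈ e)
    (g : Fin ω) :
    ρ g ≤ #{v | part v = g ∧ ∃ e ∈ {e0 ∈ EG | e0.map Sum.inl ∈ N}, v ∈ e} := by
  have hρg := hρ g
  have hauxg := haux g
  set Vg : Finset V := {v | part v = g}
  set Ag : Finset A := {a | grp a = g}
  have hsub : Vg ⊆ ({v | part v = g ∧ ∃ e ∈ {e0 ∈ EG | e0.map Sum.inl ∈ N}, v ∈ e} : Finset V) ∪
      {v ∈ Vg | ∃ a ∈ Ag, s(Sum.inl v, Sum.inr a) ∈ N} := by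
    intro v hv
    have hg : part v = g := (mem_filter.mp hv).2
    obtain ⟨e, he, hve⟩ := hall v
    rcases (hEH e).mp (hN.1 he) with ⟨e0, he0, rfl⟩ | ⟨w, a, hwa, rfl⟩
    · refine mem_union_left _ (mem_filter.mpr ⟨mem_univ v, hg, e0, mem_filter.mpr ⟨he0, he⟩, ?_⟩)
      simpa [Sym2.mem_map] using hve
    · obtain rfl : v = w := by simpa using hve
      exact mem_union_right _ (mem_filter.mpr ⟨hv, a, by simp [Ag, ← hwa, hg], he⟩)
  have := (card_le_card hsub).trans (card_union_le _ _)
  have := hN.card_matched_le Vg Ag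
  omega

end Construction

open scoped Classical in
/-- in the construction of `H` from `G`, if `M_H` is a maximum weight
matching of `H` and the budgeted matching problem on `G` is feasible, then the trace
`M = M_H ∩ E(G)` has `p`-weight equal to the minimum `p`-weight of a matching of `G`
matching at least `ρ_g` vertices of each group `V_g`. -/
theorem max_matching_trace_optimal
    {V A : Type*} [Fintype V] [Fintype A] [DecidableEq V] [DecidableEq A]
    (ω : ℕ) (part : V → Fin ω) (grp : A → Fin ω) (ρ : Fin ω → ℕ)
    (hρ : ∀ g, ρ g ≤ (univ.filter fun v => part v = g).card)
    (haux : ∀ g, (univ.filter fun a => grp a = g).card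
        = (univ.filter fun v => part v = g).card - ρ g)
    (EG : Finset (Sym2 V)) (hEGsimple : ∀ e ∈ EG, ¬ e.IsDiag)
    (p : Sym2 V → ℝ) (hp : ∀ e, 0 ≤ p e)
    (M : ℝ) (hM : ∑ e ∈ EG, p e < M)
    (EH : Finset (Sym2 (V ⊕ A)))
    (hEH : ∀ e : Sym2 (V ⊕ A), e ∈ EH ↔
      (∃ e0 ∈ EG, e = e0.map Sum.inl) ∨
      (∃ (v : V) (a : A), part v = grp a ∧ e = s(Sum.inl v, Sum.inr a)))
    (wH : Sym2 (V ⊕ A) → ℝ)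
    (hwH1 : ∀ e0 ∈ EG, wH (e0.map Sum.inl) = 2 * M - p e0)
    (hwH2 : ∀ (v : V) (a : A), wH s(Sum.inl v, Sum.inr a) = M)
    (MH : Finset (Sym2 (V ⊕ A))) (hMH : IsMatching EH MH)
    (hmax : ∀ M' : Finset (Sym2 (V ⊕ A)), IsMatching EH M' →
      ∑ e ∈ M', wH e ≤ ∑ e ∈ MH, wH e)
    (hfeas : ∃ M' : Finset (Sym2 V), IsMatching EG M' ∧
      ∀ g, ρ g ≤ (univ.filter fun v => part v = g ∧ ∃ e ∈ M', v ∈ e).card) :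
    IsLeast
      {c : ℝ | ∃ M' : Finset (Sym2 V), IsMatching EG M' ∧
        (∀ g, ρ g ≤ (univ.filter fun v => part v = g ∧ ∃ e ∈ M', v ∈ e).card) ∧
        c = ∑ e ∈ M', p e}
      (∑ e0 ∈ EG.filter (fun e0 => Sym2.map Sum.inl e0 ∈ MH), p e0) := by
  have hopt : ∀ M', IsMatching EG M' → (∀ g, ρ g ≤ #{v | part v = g ∧ ∃ e ∈ M', v ∈ e}) →
      Fintype.card V * M - ∑ e ∈ M', p e ≤ ∑ e ∈ MH, wH e := fun M' hM' hcov => by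
    obtain ⟨N, hN, hNall, hNtrace⟩ := exists_covering_extension hEH haux hM' hcov
    simpa only [hN.sum_weight_eq_of_forall_covered hEH hEGsimple hwH1 hwH2 hNall, hNtrace]
      using hmax N hN
  have hall : ∀ v, ∃ e ∈ MH, Sum.inl v ∈ e := by
    obtain ⟨M₀, hM₀, hcov₀⟩ := hfeas
    have hM₀p : ∑ e ∈ M₀, p e ≤ ∑ e ∈ EG, p e :=
      sum_le_sum_of_subset_of_nonneg hM₀.1 fun e _ _ => hp e
    refine forall_covered_of_sum_weight_gt hEH hEGsimple hp hwH1 hwH2 ?_ hMH ?_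
    · exact (sum_nonneg fun e _ => hp e).trans_lt hM
    · linarith [hopt M₀ hM₀ hcov₀]
  refine ⟨⟨_, hMH.comap Sum.inl_injective, trace_feasible hEH hρ haux hMH hall, rfl⟩, ?_⟩
  rintro _ ⟨M', hM', hcov, rfl⟩
  linarith [hopt M' hM' hcov, hMH.sum_weight_eq_of_forall_covered hEH hEGsimple hwH1 hwH2 hall]
end

section
/- Let G = (V,E) with nonnegative edge weights p and M > ∑_{e∈E} p_e. For any two matchings M_1, M_2 of the graph H (constructed as before with original-edge weights 2M−p_e and auxiliary-edge weights M), if M_1 matches all n vertices of V and M_2 leaves at least one vertex of V unmatched, then the H-weight of M_1 strictly exceeds the H-weight of M_2. -/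
open Finset

set_option maxHeartbeats 1000000 in
open scoped Classical in
/-- in the construction of `H` from `G` (original edges of weight `2M−p_e`
with `M > ∑_e p_e ≥ 0`, auxiliary edges of weight `M`), if a matching `M₁` of `H` matches
all vertices of `V` while `M₂` leaves some vertex of `V` unmatched, then the `H`-weight
of `M₁` strictly exceeds that of `M₂`. -/
theorem full_matching_beats_partial
    {V A : Type*} [Fintype V] [Fintype A] [DecidableEq V] [DecidableEq A]
    (ω : ℕ) (part : V → Fin ω) (grp : A → Fin ω) (ρ : Fin ω → ℕ)
    (hρ : ∀ g, ρ g ≤ (univ.filter fun v => part v = g).card)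
    (haux : ∀ g, (univ.filter fun a => grp a = g).card
        = (univ.filter fun v => part v = g).card - ρ g)
    (EG : Finset (Sym2 V)) (hEGsimple : ∀ e ∈ EG, ¬ e.IsDiag)
    (p : Sym2 V → ℝ) (hp : ∀ e, 0 ≤ p e)
    (M : ℝ) (hM : ∑ e ∈ EG, p e < M)
    (EH : Finset (Sym2 (V ⊕ A)))
    (hEH : ∀ e : Sym2 (V ⊕ A), e ∈ EH ↔
      (∃ e0 ∈ EG, e = e0.map Sum.inl) ∨
      (∃ (v : V) (a : A), part v = grp a ∧ e = s(Sum.inl v, Sum.inr a)))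
    (wH : Sym2 (V ⊕ A) → ℝ)
    (hwH1 : ∀ e0 ∈ EG, wH (e0.map Sum.inl) = 2 * M - p e0)
    (hwH2 : ∀ (v : V) (a : A), wH s(Sum.inl v, Sum.inr a) = M)
    (M1 M2 : Finset (Sym2 (V ⊕ A)))
    (hM1 : IsMatching EH M1) (hM2 : IsMatching EH M2)
    (hfull : ∀ v : V, ∃ e ∈ M1, (Sum.inl v : V ⊕ A) ∈ e)
    (hmiss : ∃ v : V, ∀ e ∈ M2, (Sum.inl v : V ⊕ A) ∉ e) :
    ∑ e ∈ M2, wH e < ∑ e ∈ M1, wH e := by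
  classical
  set q : Sym2 (V ⊕ A) → ℝ :=
    fun e => M * ((univ.filter fun v : V => (Sum.inl v : V ⊕ A) ∈ e).card : ℝ) - wH e
    with hqdef
  have horig : ∀ e0 : Sym2 V, ¬ e0.IsDiag →
      (univ.filter fun v : V => (Sum.inl v : V ⊕ A) ∈ e0.map Sum.inl).card = 2 := by
    intro e0
    induction e0 using Sym2.ind with
    | _ a b =>
      intro h
      have hab : a ≠ b := by simpa using h
      have heq : (univ.filter fun v : V => (Sum.inl v : V ⊕ A) ∈ (s(a,b)).map Sum.inl)
          = {a, b} := by
        ext v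
        simp [Sym2.mem_iff, Sum.inl.injEq]
      rw [heq, card_insert_of_notMem (by simpa using hab), card_singleton]
  have haux1 : ∀ (v : V) (a : A),
      (univ.filter fun v' : V => (Sum.inl v' : V ⊕ A) ∈ s(Sum.inl v, Sum.inr a)).card = 1 := by
    intro v a
    have heq : (univ.filter fun v' : V => (Sum.inl v' : V ⊕ A) ∈ s(Sum.inl v, Sum.inr a))
        = {v} := by
      ext v'
      simp [Sym2.mem_iff, Sum.inl.injEq]
    rw [heq, card_singleton]
  have hMpos : 0 < M := lt_of_le_of_lt (Finset.sum_nonneg fun e _ => hp e) hM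
  -- nonnegativity of q on EH
  have hq0 : ∀ e ∈ EH, 0 ≤ q e := by
    intro e he
    rcases (hEH e).1 he with ⟨e0, he0, rfl⟩ | ⟨v, a, _, rfl⟩
    · have := hp e0
      simp only [hqdef]
      rw [horig e0 (hEGsimple e0 he0), hwH1 e0 he0]
      push_cast
      linarith
    · simp only [hqdef]
      rw [haux1 v a, hwH2 v a]
      norm_num
  -- weight formula for a matching
  have wform : ∀ N : Finset (Sym2 (V ⊕ A)), IsMatching EH N →
      ∑ e ∈ N, wH e
        = M * (N.biUnion fun e => univ.filter fun v : V => (Sum.inl v : V ⊕ A) ∈ e).card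
          - ∑ e ∈ N, q e := by
    intro N hN
    have hdisj : ∀ e ∈ N, ∀ e' ∈ N, e ≠ e' →
        Disjoint (univ.filter fun v : V => (Sum.inl v : V ⊕ A) ∈ e)
          (univ.filter fun v : V => (Sum.inl v : V ⊕ A) ∈ e') := by
      intro e he e' he' hne
      rw [Finset.disjoint_left]
      intro v hv hv'
      exact hN.2 e he e' he' hne (Sum.inl v)
        ⟨(mem_filter.1 hv).2, (mem_filter.1 hv').2⟩
    rw [Finset.card_biUnion hdisj]
    push_cast
    rw [Finset.mul_sum]
    rw [← Finset.sum_sub_distrib]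
    exact Finset.sum_congr rfl fun e _ => by simp [hqdef]
  -- matched vertex counts
  set n := Fintype.card V with hn
  have hcard1 : (M1.biUnion fun e => univ.filter
      fun v : V => (Sum.inl v : V ⊕ A) ∈ e).card = n := by
    have : (M1.biUnion fun e => univ.filter
        fun v : V => (Sum.inl v : V ⊕ A) ∈ e) = univ := by
      ext v
      simp only [Finset.mem_biUnion, mem_filter, mem_univ, true_and, iff_true]
      exact hfull v
    rw [this, hn, Finset.card_univ]
  obtain ⟨v0, hv0⟩ := hmiss
  have hn1 : 1 ≤ n := Fintype.card_pos_iff.2 ⟨v0⟩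
  have hcard2 : (M2.biUnion fun e => univ.filter
      fun v : V => (Sum.inl v : V ⊕ A) ∈ e).card ≤ n - 1 := by
    have hsub : (M2.biUnion fun e => univ.filter
        fun v : V => (Sum.inl v : V ⊕ A) ∈ e) ⊆ univ.erase v0 := by
      intro v hv
      obtain ⟨e, he, hve⟩ := Finset.mem_biUnion.1 hv
      refine Finset.mem_erase.2 ⟨?_, mem_univ v⟩
      rintro rfl
      exact hv0 e he (mem_filter.1 hve).2
    calc _ ≤ (univ.erase v0).card := Finset.card_le_card hsub
    _ = n - 1 := by rw [Finset.card_erase_of_mem (mem_univ v0), hn, Finset.card_univ]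
  -- bound S1
  have hS1 : ∑ e ∈ M1, q e ≤ ∑ e ∈ EG, p e := by
    set T : Finset (Sym2 V) := EG.filter (fun e0 => e0.map Sum.inl ∈ M1) with hT
    have himg : M1.filter (fun e => ∃ e0 ∈ EG, e = e0.map Sum.inl)
        = T.image (Sym2.map Sum.inl) := by
      ext e
      simp only [mem_filter, Finset.mem_image, hT]
      constructor
      · rintro ⟨he, e0, he0, rfl⟩
        exact ⟨e0, ⟨he0, he⟩, rfl⟩
      · rintro ⟨e0, ⟨he0, he⟩, rfl⟩
        exact ⟨he, e0, he0, rfl⟩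
    have hsplit : ∑ e ∈ M1, q e
        = ∑ e ∈ M1.filter (fun e => ∃ e0 ∈ EG, e = e0.map Sum.inl), q e := by
      rw [← Finset.sum_filter_add_sum_filter_not M1 (fun e => ∃ e0 ∈ EG, e = e0.map Sum.inl)]
      have : ∑ e ∈ M1.filter (fun e => ¬ ∃ e0 ∈ EG, e = e0.map Sum.inl), q e = 0 := by
        apply Finset.sum_eq_zero
        intro e he
        obtain ⟨he1, he2⟩ := mem_filter.1 he
        rcases (hEH e).1 (hM1.1 he1) with h | ⟨v, a, _, rfl⟩
        · exact absurd h he2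
        · simp only [hqdef]
          rw [haux1 v a, hwH2 v a]
          norm_num
      linarith
    rw [hsplit, himg, Finset.sum_image
      (fun x _ y _ h => Sym2.map.injective Sum.inl_injective h)]
    have : ∑ e0 ∈ T, q (e0.map Sum.inl) = ∑ e0 ∈ T, p e0 := by
      apply Finset.sum_congr rfl
      intro e0 he0
      have he0' : e0 ∈ EG := (mem_filter.1 he0).1
      simp only [hqdef]
      rw [horig e0 (hEGsimple e0 he0'), hwH1 e0 he0']
      push_cast; ring
    rw [this]
    exact Finset.sum_le_sum_of_subset_of_nonneg (Finset.filter_subset _ _)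
      (fun e _ _ => hp e)
  have hS2 : 0 ≤ ∑ e ∈ M2, q e :=
    Finset.sum_nonneg fun e he => hq0 e (hM2.1 he)
  rw [wform M1 hM1, wform M2 hM2, hcard1]
  have hk2 : ((M2.biUnion fun e => univ.filter
      fun v : V => (Sum.inl v : V ⊕ A) ∈ e).card : ℝ) ≤ (n : ℝ) - 1 := by
    have := hcard2
    have h1 : ((M2.biUnion fun e => univ.filter
        fun v : V => (Sum.inl v : V ⊕ A) ∈ e).card : ℝ) ≤ ((n - 1 : ℕ) : ℝ) := by
      exact_mod_cast this
    rwa [Nat.cast_sub hn1, Nat.cast_one] at h1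
  have hmul : M * ((M2.biUnion fun e => univ.filter
      fun v : V => (Sum.inl v : V ⊕ A) ∈ e).card : ℝ) ≤ M * ((n : ℝ) - 1) :=
    mul_le_mul_of_nonneg_left hk2 hMpos.le
  nlinarith [hS1, hS2, hM, hmul]
end
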